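/- arXiv:1801.01813 — 2 statements merged into one kernel-verified Lean document; each statement's English description precedes it below -/
import Mathlib

section
/- Suppose that for an even integer N ≥ 4, more than half of the odd positive integers less than N can be written as the sum of an odd prime and a power of two. Then N itself can be written as the sum of two odd primes and two powers of two. -/
open Classical in
theorem stmt_9 (N : ℕ) (hN : 4 ≤ N) (heven : 2 ∣ N)
    (h : ((Finset.range N).filter (fun k => Odd k ∧ 0 < k ∧
            ∃ p v : ℕ, p.Prime ∧ Odd p ∧ 1 ≤ v ∧ k = p + 2 ^ v)).card * 2 >
         ((Finset.range N).filter (fun k => Odd k ∧ 0 < k)).card) :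
    ∃ p₁ p₂ v₁ v₂ : ℕ, p₁.Prime ∧ Odd p₁ ∧ p₂.Prime ∧ Odd p₂ ∧ 1 ≤ v₁ ∧ 1 ≤ v₂ ∧
      N = p₁ + p₂ + 2 ^ v₁ + 2 ^ v₂ := by
  set A := (Finset.range N).filter (fun k => Odd k ∧ 0 < k ∧
            ∃ p v : ℕ, p.Prime ∧ Odd p ∧ 1 ≤ v ∧ k = p + 2 ^ v) with hA
  set B := (Finset.range N).filter (fun k => Odd k ∧ 0 < k) with hB
  have hNodd : Even N := even_iff_two_dvd.mpr heven
  have hmemA : ∀ k ∈ A, k ∈ Finset.range N ∧ Odd k ∧ 0 < k ∧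
      ∃ p v : ℕ, p.Prime ∧ Odd p ∧ 1 ≤ v ∧ k = p + 2 ^ v := by
    intro k hk
    simp only [hA, Finset.mem_filter] at hk
    exact ⟨hk.1, hk.2⟩
  have hsubB : ∀ k ∈ A, N - k ∈ B := by
    intro k hk
    obtain ⟨hr, hodd, hpos, _⟩ := hmemA k hk
    have hkN : k < N := Finset.mem_range.mp hr
    simp only [hB, Finset.mem_filter, Finset.mem_range]
    refine ⟨by omega, ?_, by omega⟩
    have := Nat.Even.sub_odd (le_of_lt hkN) hNodd hodd
    exact this
  set A' := A.image (fun k => N - k) with hA'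
  have hcardA' : A'.card = A.card := by
    apply Finset.card_image_of_injOn
    intro a ha b hb hab
    simp only at hab
    have haN : a < N := Finset.mem_range.mp (hmemA a ha).1
    have hbN : b < N := Finset.mem_range.mp (hmemA b hb).1
    omega
  have hA'sub : A' ⊆ B := by
    intro x hx
    obtain ⟨k, hk, rfl⟩ := Finset.mem_image.mp hx
    exact hsubB k hk
  have hAsub : A ⊆ B := by
    intro x hx
    obtain ⟨h1, h2, h3, _⟩ := hmemA x hx
    simp only [hB, Finset.mem_filter]
    exact ⟨h1, h2, h3⟩
  have hnd : ¬ Disjoint A A' := by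
    intro hd
    have := Finset.card_union_of_disjoint hd
    have hle : (A ∪ A').card ≤ B.card :=
      Finset.card_le_card (Finset.union_subset hAsub hA'sub)
    omega
  obtain ⟨k, hkA, hkA'⟩ := Finset.not_disjoint_iff.mp hnd
  obtain ⟨j, hjA, hjk⟩ := Finset.mem_image.mp hkA'
  obtain ⟨hjr, _, _, p₁, v₁, hp₁, ho₁, hv₁, hrep₁⟩ := hmemA j hjA
  obtain ⟨hkr, _, _, p₂, v₂, hp₂, ho₂, hv₂, hrep₂⟩ := hmemA k hkA
  have hjN : j < N := Finset.mem_range.mp hjr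
  refine ⟨p₁, p₂, v₁, v₂, hp₁, ho₁, hp₂, ho₂, hv₁, hv₂, by omega⟩
end

section
/- Define a_k(2) = (-1)^{k+1} · (-(1 + log 2)/3^{k+1} + (1/(3·2^k)) · ∑_{m=0}^{k-1} (1/(k-m))·(2/3)^m) for k ≥ 1. Then |a_k(2)| ≤ 1/2^k. -/
noncomputable def aCoeff (k : ℕ) : ℝ :=
  (-1) ^ (k + 1) *
    (-(1 + Real.log 2) / 3 ^ (k + 1) +
      (1 / (3 * 2 ^ k)) * ∑ m ∈ Finset.range k, (1 / ((k : ℝ) - m)) * (2 / 3) ^ m)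

theorem stmt_15 (k : ℕ) (hk : 1 ≤ k) : |aCoeff k| ≤ 1 / 2 ^ k := by
  set S : ℝ := ∑ m ∈ Finset.range k, (1 / ((k : ℝ) - m)) * (2 / 3) ^ m with hS
  have hterm : ∀ m ∈ Finset.range k, (0:ℝ) ≤ (1 / ((k : ℝ) - m)) * (2 / 3) ^ m := by
    intro m hm
    have hm' : m < k := Finset.mem_range.mp hm
    have : (0:ℝ) < (k : ℝ) - m := by
      have : (m:ℝ) < k := by exact_mod_cast hm'
      linarith
    positivity
  have hS0 : 0 ≤ S := Finset.sum_nonneg hterm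
  have hS3 : S ≤ 3 := by
    have h1 : S ≤ ∑ m ∈ Finset.range k, ((2:ℝ) / 3) ^ m := by
      apply Finset.sum_le_sum
      intro m hm
      have hm' : m < k := Finset.mem_range.mp hm
      have hk1 : (1:ℝ) ≤ (k : ℝ) - m := by
        have : (m:ℝ) + 1 ≤ k := by exact_mod_cast hm'
        linarith
      have hp : (0:ℝ) ≤ (2/3) ^ m := by positivity
      have : 1 / ((k : ℝ) - m) ≤ 1 := by
        rw [div_le_one (by linarith)]; linarith
      nlinarith
    have h2 : ∑ m ∈ Finset.range k, ((2:ℝ) / 3) ^ m ≤ 3 := by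
      have := geom_sum_eq (by norm_num : (2:ℝ)/3 ≠ 1) k
      rw [this]
      have hp : (0:ℝ) ≤ (2/3) ^ k := by positivity
      rw [div_le_iff_of_neg (by norm_num : (2:ℝ)/3 - 1 < 0)]
      linarith
    linarith
  have hlog0 : (0:ℝ) ≤ Real.log 2 := Real.log_nonneg (by norm_num)
  have hlog1 : Real.log 2 ≤ 1 := by
    have := Real.log_le_sub_one_of_pos (by norm_num : (0:ℝ) < 2)
    linarith
  have h2k : (0:ℝ) < 2 ^ k := by positivity
  have h3k : (0:ℝ) < 3 ^ (k+1) := by positivity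
  have hpow : (2:ℝ) * 2 ^ k ≤ 3 ^ (k+1) := by
    have : (2:ℝ) ^ (k+1) ≤ 3 ^ (k+1) :=
      pow_le_pow_left₀ (by norm_num) (by norm_num) _
    calc (2:ℝ) * 2 ^ k = 2 ^ (k+1) := by ring
    _ ≤ 3 ^ (k+1) := this
  have key : |(-(1 + Real.log 2) / 3 ^ (k + 1) +
      (1 / (3 * 2 ^ k)) * S)| ≤ 1 / 2 ^ k := by
    rw [abs_le]
    constructor
    · have h1 : (0:ℝ) ≤ (1 / (3 * 2 ^ k)) * S := by positivity
      have h2 : -(1 / 2 ^ k) ≤ -(1 + Real.log 2) / 3 ^ (k + 1) := by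
        rw [neg_le, neg_div, neg_neg, div_le_div_iff₀ h3k h2k]
        nlinarith
      linarith
    · have h1 : -(1 + Real.log 2) / 3 ^ (k + 1) ≤ 0 := by
        apply div_nonpos_of_nonpos_of_nonneg <;> [linarith; positivity]
      have h2 : (1 / (3 * 2 ^ k)) * S ≤ 1 / 2 ^ k := by
        rw [div_mul_eq_mul_div, one_mul, div_le_div_iff₀ (by positivity) h2k]
        nlinarith
      linarith
  calc |aCoeff k| = |(-(1 + Real.log 2) / 3 ^ (k + 1) + (1 / (3 * 2 ^ k)) * S)| := by
        rw [aCoeff, abs_mul, abs_pow, abs_neg, abs_one, one_pow, one_mul]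
  _ ≤ 1 / 2 ^ k := key
end
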